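/- arXiv:2204.09084 — 2 statements merged into one kernel-verified Lean document; each statement's English description precedes it below -/
import Mathlib

section
/- Let Ω ⊆ ℝ³ be open and let α, β be set functions defined on the open subsets of Ω with values in [0,+∞], both increasing (i.e. vanishing on the empty set and monotone with respect to inclusion). Assume: (i) α(A′ ∪ B) ≤ α(A) + β(B) whenever A′, A, B are open subsets of Ω with the closure of A′ compact and contained in A; (ii) there exists a nonnegative Lebesgue-integrable function g on Ω such that β(A) ≤ ∫_A g dx for every open A ⊆ Ω. Then α is inner regular: for every open A ⊆ Ω, α(A) = sup{ α(B) : B open, closure of B compact and contained in A }. -/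
/-!
Given `ε > 0`, inner regularity of the finite measure `g dx` gives a compact `K ⊆ A` with
`∫_{A \ K} g < ε`. Squeeze open sets `U ⋐ V ⋐ A` around `K`; since `A = U ∪ (A \ K)`,
almost subadditivity yields `α A ≤ α V + β (A \ K) ≤ α V + ε`.
-/

open MeasureTheory

theorem le_iSup_of_almost_subadditive {X : Type*} [TopologicalSpace X] [LocallyCompactSpace X]
    [RegularSpace X] {Ω A : Set X} (hA : IsOpen A) (hAΩ : A ⊆ Ω) {α β : Set X → ENNReal}
    (hsub : ∀ A' A B : Set X, IsOpen A' → IsOpen A → IsOpen B →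
      A' ⊆ Ω → A ⊆ Ω → B ⊆ Ω → IsCompact (closure A') → closure A' ⊆ A →
      α (A' ∪ B) ≤ α A + β B)
    (happrox : ∀ ε : ENNReal, ε ≠ 0 →
      ∃ K ⊆ A, IsCompact K ∧ IsClosed K ∧ β (A \ K) < ε) :
    α A ≤ ⨆ (B : Set X) (_ : IsOpen B) (_ : IsCompact (closure B))
      (_ : closure B ⊆ A), α B := by
  refine ENNReal.le_of_forall_pos_le_add fun ε hε _ => ?_
  obtain ⟨K, hKA, hK, hKclosed, hβK⟩ := happrox ε (by exact_mod_cast hε.ne')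
  obtain ⟨V, hV, hKV, hVA, hVc⟩ := exists_open_between_and_isCompact_closure hK hA hKA
  obtain ⟨U, hU, hKU, hUV, hUc⟩ := exists_open_between_and_isCompact_closure hK hV hKV
  have hVA' : V ⊆ A := subset_closure.trans hVA
  have hUA : U ⊆ A := (subset_closure.trans hUV).trans hVA'
  have hA_eq : A = U ∪ A \ K := Set.Subset.antisymm
    (fun x hx => (em (x ∈ K)).imp (fun h => hKU h) fun h => ⟨hx, h⟩)
    (Set.union_subset hUA Set.sdiff_subset)
  have hαV : α V ≤ ⨆ (B : Set X) (_ : IsOpen B) (_ : IsCompact (closure B))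
      (_ : closure B ⊆ A), α B :=
    le_iSup_of_le V <| le_iSup_of_le hV <| le_iSup_of_le hVc <| le_iSup_of_le hVA le_rfl
  calc α A = α (U ∪ A \ K) := congrArg α hA_eq
    _ ≤ α V + β (A \ K) := hsub U V (A \ K) hU hV (hA.sdiff hKclosed) (hUA.trans hAΩ)
        (hVA'.trans hAΩ) (Set.sdiff_subset.trans hAΩ) hUc hUV
    _ ≤ _ + ε := add_le_add hαV hβK.le

theorem MeasureTheory.IntegrableOn.exists_isCompact_isClosed_setIntegral_sdiff_lt
    {X : Type*} [TopologicalSpace X] [SecondCountableTopology X]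
    [TopologicalSpace.IsCompletelyPseudoMetrizableSpace X] [MeasurableSpace X] [BorelSpace X]
    {μ : Measure X} {g : X → ℝ} {A : Set X} (hg : ∀ x, 0 ≤ g x)
    (hgA : IntegrableOn g A μ) (hA : MeasurableSet A) {ε : ENNReal} (hε : ε ≠ 0) :
    ∃ K ⊆ A, IsCompact K ∧ IsClosed K ∧
      ENNReal.ofReal (∫ x in A \ K, g x ∂μ) < ε := by
  set ν := μ.withDensity fun x => ENNReal.ofReal (g x)
  have hν : ∀ s ⊆ A, MeasurableSet s → ν s = ENNReal.ofReal (∫ x in s, g x ∂μ) :=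
    fun s hs hsm => by
      rw [withDensity_apply _ hsm, ofReal_integral_eq_lintegral_ofReal (hgA.mono_set hs)
        (Filter.Eventually.of_forall hg)]
  obtain ⟨K, hKA, hK, hKclosed, hνK⟩ := hA.exists_isCompact_isClosed_sdiff_lt (μ := ν)
    ((hν A le_rfl hA).trans_ne ENNReal.ofReal_ne_top) hε
  refine ⟨K, hKA, hK, hKclosed, ?_⟩
  rwa [← hν (A \ K) Set.sdiff_subset (hA.diff hKclosed.measurableSet)]

theorem innerRegular_of_almost_subadditive_general
    (Ω : Set (Fin 3 → ℝ))
    (α β : Set (Fin 3 → ℝ) → ENNReal)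
    (hαmono : ∀ A B : Set (Fin 3 → ℝ), IsOpen A → IsOpen B → A ⊆ Ω → B ⊆ Ω →
      A ⊆ B → α A ≤ α B)
    (hsub : ∀ A' A B : Set (Fin 3 → ℝ), IsOpen A' → IsOpen A → IsOpen B →
      A' ⊆ Ω → A ⊆ Ω → B ⊆ Ω → IsCompact (closure A') → closure A' ⊆ A →
      α (A' ∪ B) ≤ α A + β B)
    (g : (Fin 3 → ℝ) → ℝ) (hg : ∀ x, 0 ≤ g x) (hgint : IntegrableOn g Ω)
    (hβg : ∀ A : Set (Fin 3 → ℝ), IsOpen A → A ⊆ Ω →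
      β A ≤ ENNReal.ofReal (∫ x in A, g x)) :
    ∀ A : Set (Fin 3 → ℝ), IsOpen A → A ⊆ Ω →
      α A = ⨆ (B : Set (Fin 3 → ℝ)) (_ : IsOpen B) (_ : IsCompact (closure B))
        (_ : closure B ⊆ A), α B := by
  intro A hA hAΩ
  refine le_antisymm (le_iSup_of_almost_subadditive hA hAΩ hsub fun ε hε => ?_) ?_
  · obtain ⟨K, hKA, hK, hKclosed, hgK⟩ := (hgint.mono_set hAΩ)
      |>.exists_isCompact_isClosed_setIntegral_sdiff_lt hg hA.measurableSet hε
    exact ⟨K, hKA, hK, hKclosed,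
      (hβg _ (hA.sdiff hKclosed) (Set.sdiff_subset.trans hAΩ)).trans_lt hgK⟩
  · refine iSup_le fun B => iSup_le fun hB => iSup_le fun _ => iSup_le fun hBA => ?_
    have hBA' : B ⊆ A := subset_closure.trans hBA
    exact hαmono B A hB hA (hBA'.trans hAΩ) hAΩ hBA'

/-- Inner regularity of an increasing set function `α` satisfying an almost-subadditivity
estimate with respect to a set function `β` dominated by an integral. -/
theorem innerRegular_of_almost_subadditive
    (Ω : Set (Fin 3 → ℝ)) (hΩ : IsOpen Ω)
    (α β : Set (Fin 3 → ℝ) → ENNReal)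
    (hα0 : α ∅ = 0) (hβ0 : β ∅ = 0)
    (hαmono : ∀ A B : Set (Fin 3 → ℝ), IsOpen A → IsOpen B → A ⊆ Ω → B ⊆ Ω →
      A ⊆ B → α A ≤ α B)
    (hβmono : ∀ A B : Set (Fin 3 → ℝ), IsOpen A → IsOpen B → A ⊆ Ω → B ⊆ Ω →
      A ⊆ B → β A ≤ β B)
    (hsub : ∀ A' A B : Set (Fin 3 → ℝ), IsOpen A' → IsOpen A → IsOpen B →
      A' ⊆ Ω → A ⊆ Ω → B ⊆ Ω → IsCompact (closure A') → closure A' ⊆ A →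
      α (A' ∪ B) ≤ α A + β B)
    (g : (Fin 3 → ℝ) → ℝ) (hg : ∀ x, 0 ≤ g x) (hgint : IntegrableOn g Ω)
    (hβg : ∀ A : Set (Fin 3 → ℝ), IsOpen A → A ⊆ Ω →
      β A ≤ ENNReal.ofReal (∫ x in A, g x)) :
    ∀ A : Set (Fin 3 → ℝ), IsOpen A → A ⊆ Ω →
      α A = ⨆ (B : Set (Fin 3 → ℝ)) (_ : IsOpen B) (_ : IsCompact (closure B))
        (_ : closure B ⊆ A), α B :=
  innerRegular_of_almost_subadditive_general Ω α β hαmono hsub g hg hgint hβg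
end

section
/- Let (X,d) be a metric space, let (G_k), (H_k), (J_k) be sequences of functionals from X to [0,+∞], and fix x ∈ X. Assume there exist a constant C ≥ 1 and a function ω : [0,∞) → [0,∞) with ω(0) = 0 and ω continuous at 0, such that for every σ > 0 there is M_σ > 0 with the property: for every k ∈ ℕ and all u, v ∈ X there exists w ∈ X with d(w,x) ≤ C(d(u,x) + d(v,x)) and J_k(w) ≤ (1+σ)(G_k(u) + H_k(v)) + M_σ ω(d(u,v)) + σ. For a sequence of functionals (Φ_k) define Φ′(x) := inf{ liminf_k Φ_k(x_k) : x_k → x } and Φ″(x) := inf{ limsup_k Φ_k(x_k) : x_k → x }. Then J′(x) ≤ G′(x) + H″(x) and J″(x) ≤ G″(x) + H″(x). -/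
open Filter Topology

/-- The `Γ`-lower limit of a sequence of functionals at a point. -/
noncomputable def gammaLiminf {X : Type*} [MetricSpace X]
    (Φ : ℕ → X → ENNReal) (x : X) : ENNReal :=
  ⨅ u : {u : ℕ → X // Tendsto u atTop (𝓝 x)},
    Filter.liminf (fun k => Φ k (u.1 k)) atTop

/-- The `Γ`-upper limit of a sequence of functionals at a point. -/
noncomputable def gammaLimsup {X : Type*} [MetricSpace X]
    (Φ : ℕ → X → ENNReal) (x : X) : ENNReal :=
  ⨅ u : {u : ℕ → X // Tendsto u atTop (𝓝 x)},
    Filter.limsup (fun k => Φ k (u.1 k)) atTop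

/-- Auxiliary: in `NNReal∞`, `liminf (u + v) ≤ limsup u + liminf v`. -/
lemma myLiminfAddLe (u v : ℕ → ENNReal) :
    Filter.liminf (fun k => u k + v k) atTop ≤
      Filter.limsup u atTop + Filter.liminf v atTop := by
  refine ENNReal.le_of_forall_pos_le_add fun ε hε hfin => ?_
  have hu_ne : Filter.limsup u atTop ≠ ⊤ :=
    fun h => by simp [h, top_add] at hfin
  have hv_ne : Filter.liminf v atTop ≠ ⊤ :=
    fun h => by simp [h, add_top] at hfin
  have hεne : (ε : ENNReal) ≠ 0 := by
    simpa using (ENNReal.coe_pos.mpr hε).ne'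
  have hev : ∀ᶠ k in atTop, u k < Filter.limsup u atTop + ε :=
    Filter.eventually_lt_of_limsup_lt (ENNReal.lt_add_right hu_ne hεne)
  calc Filter.liminf (fun k => u k + v k) atTop
      ≤ Filter.liminf (fun k => (Filter.limsup u atTop + ε) + v k) atTop := by
        refine Filter.liminf_le_liminf ?_
        filter_upwards [hev] with k hk using add_le_add hk.le le_rfl
    _ = (Filter.limsup u atTop + ε) + Filter.liminf v atTop := by
        exact liminf_const_add atTop v (Filter.limsup u atTop + ε)
          (by isBoundedDefault) (by isBoundedDefault)
    _ = Filter.limsup u atTop + Filter.liminf v atTop + ε := by ring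

/-- Auxiliary: in `NNReal∞`, `liminf (u + v) ≤ liminf u + limsup v`. -/
lemma myLiminfAddLe' (u v : ℕ → ENNReal) :
    Filter.liminf (fun k => u k + v k) atTop ≤
      Filter.liminf u atTop + Filter.limsup v atTop := by
  have := myLiminfAddLe v u
  simpa [add_comm] using this

/-- Auxiliary: in `NNReal∞`, `limsup (u + v) ≤ limsup u + limsup v`. -/
lemma myLimsupAddLe (u v : ℕ → ENNReal) :
    Filter.limsup (fun k => u k + v k) atTop ≤
      Filter.limsup u atTop + Filter.limsup v atTop := by
  refine ENNReal.le_of_forall_pos_le_add fun ε hε hfin => ?_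
  have hu_ne : Filter.limsup u atTop ≠ ⊤ :=
    fun h => by simp [h, top_add] at hfin
  have hv_ne : Filter.limsup v atTop ≠ ⊤ :=
    fun h => by simp [h, add_top] at hfin
  have hε2 : ((ε / 2 : NNReal) : ENNReal) ≠ 0 := by
    simpa using (ENNReal.coe_pos.mpr (half_pos hε)).ne'
  have hevu : ∀ᶠ k in atTop, u k < Filter.limsup u atTop + (ε / 2 : NNReal) :=
    Filter.eventually_lt_of_limsup_lt (ENNReal.lt_add_right hu_ne hε2)
  have hevv : ∀ᶠ k in atTop, v k < Filter.limsup v atTop + (ε / 2 : NNReal) :=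
    Filter.eventually_lt_of_limsup_lt (ENNReal.lt_add_right hv_ne hε2)
  refine Filter.limsup_le_of_le (by isBoundedDefault) ?_
  filter_upwards [hevu, hevv] with k hk1 hk2
  calc u k + v k ≤ (Filter.limsup u atTop + (ε / 2 : NNReal)) +
        (Filter.limsup v atTop + (ε / 2 : NNReal)) := add_le_add hk1.le hk2.le
    _ = Filter.limsup u atTop + Filter.limsup v atTop +
        (((ε / 2 : NNReal) : ENNReal) + ((ε / 2 : NNReal) : ENNReal)) := by ring
    _ = Filter.limsup u atTop + Filter.limsup v atTop + ε := by
        rw [← ENNReal.coe_add, add_halves]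

/-- Auxiliary: if `a ≤ (1+σ)·b + σ` for every `σ > 0`, then `a ≤ b`. -/
lemma myLimitStep (a b : ENNReal)
    (h : ∀ σ : ℝ, 0 < σ → a ≤ ENNReal.ofReal (1 + σ) * b + ENNReal.ofReal σ) :
    a ≤ b := by
  rcases eq_or_ne b ⊤ with rfl | hb
  · exact le_top
  have h1 : Tendsto (fun σ : ℝ => ENNReal.ofReal (1 + σ))
      (𝓝[>] (0 : ℝ)) (𝓝 (ENNReal.ofReal (1 + 0))) :=
    (ENNReal.continuous_ofReal.tendsto _).comp
      (((continuous_const.add continuous_id).tendsto 0).mono_left nhdsWithin_le_nhds)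
  have h2 : Tendsto (fun σ : ℝ => ENNReal.ofReal σ) (𝓝[>] (0 : ℝ))
      (𝓝 (ENNReal.ofReal 0)) :=
    (ENNReal.continuous_ofReal.tendsto _).comp
      (continuous_id.tendsto 0 |>.mono_left nhdsWithin_le_nhds)
  have ht : Tendsto (fun σ : ℝ => ENNReal.ofReal (1 + σ) * b + ENNReal.ofReal σ)
      (𝓝[>] (0 : ℝ)) (𝓝 (ENNReal.ofReal (1 + 0) * b + ENNReal.ofReal 0)) := by
    exact (ENNReal.Tendsto.mul_const h1 (Or.inr hb)).add h2
  have : Tendsto (fun σ : ℝ => ENNReal.ofReal (1 + σ) * b + ENNReal.ofReal σ)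
      (𝓝[>] (0 : ℝ)) (𝓝 b) := by
    simpa using ht
  exact ge_of_tendsto this (by
    filter_upwards [self_mem_nhdsWithin] with σ hσ
    exact h σ hσ)

/-- Abstract almost-subadditivity consequence of the fundamental estimate:
`J′(x) ≤ G′(x) + H″(x)` and `J″(x) ≤ G″(x) + H″(x)`. -/
theorem gamma_limits_almost_subadditive {X : Type*} [MetricSpace X]
    (G H J : ℕ → X → ENNReal) (x : X)
    (C : ℝ) (hC : 1 ≤ C)
    (ω : ℝ → ℝ) (hωnonneg : ∀ t : ℝ, 0 ≤ t → 0 ≤ ω t) (hω0 : ω 0 = 0)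
    (hωcont : ContinuousWithinAt ω (Set.Ici (0 : ℝ)) 0)
    (hfund : ∀ σ : ℝ, 0 < σ → ∃ M : ℝ, 0 < M ∧
      ∀ k : ℕ, ∀ u v : X, ∃ w : X,
        dist w x ≤ C * (dist u x + dist v x) ∧
        J k w ≤ ENNReal.ofReal (1 + σ) * (G k u + H k v) +
          ENNReal.ofReal (M * ω (dist u v)) + ENNReal.ofReal σ) :
    gammaLiminf J x ≤ gammaLiminf G x + gammaLimsup H x ∧
      gammaLimsup J x ≤ gammaLimsup G x + gammaLimsup H x := by
  -- main estimate, for a fixed pair of admissible sequences and fixed σ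
  have key : ∀ u v : ℕ → X, Tendsto u atTop (𝓝 x) → Tendsto v atTop (𝓝 x) →
      ∀ σ : ℝ, 0 < σ →
      (gammaLiminf J x ≤ ENNReal.ofReal (1 + σ) *
          (Filter.liminf (fun k => G k (u k)) atTop +
            Filter.limsup (fun k => H k (v k)) atTop) + ENNReal.ofReal σ) ∧
      (gammaLimsup J x ≤ ENNReal.ofReal (1 + σ) *
          (Filter.limsup (fun k => G k (u k)) atTop +
            Filter.limsup (fun k => H k (v k)) atTop) + ENNReal.ofReal σ) := by
    intro u v hu hv σ hσ
    obtain ⟨M, hM, hest⟩ := hfund σ hσ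
    choose w hw1 hw2 using fun k => hest k (u k) (v k)
    -- w tends to x
    have hux : Tendsto (fun k => dist (u k) x) atTop (𝓝 0) := by
      simpa using hu.dist (tendsto_const_nhds (x := x))
    have hvx : Tendsto (fun k => dist (v k) x) atTop (𝓝 0) := by
      simpa using hv.dist (tendsto_const_nhds (x := x))
    have hwt : Tendsto w atTop (𝓝 x) := by
      rw [tendsto_iff_dist_tendsto_zero]
      have hb : Tendsto (fun k => C * (dist (u k) x + dist (v k) x)) atTop (𝓝 0) := by
        simpa using tendsto_const_nhds.mul (hux.add hvx)
      exact squeeze_zero (fun k => dist_nonneg) hw1 hb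
    -- the error term tends to 0
    have hduv : Tendsto (fun k => dist (u k) (v k)) atTop (𝓝 0) := by
      simpa using hu.dist hv
    have hωd : Tendsto (fun k => ω (dist (u k) (v k))) atTop (𝓝 0) := by
      have : Tendsto (fun k => dist (u k) (v k)) atTop (𝓝[Set.Ici 0] 0) :=
        tendsto_nhdsWithin_iff.mpr ⟨hduv, .of_forall fun k => dist_nonneg⟩
      simpa [hω0, Function.comp_def] using hωcont.tendsto.comp this
    have herr : Tendsto (fun k => ENNReal.ofReal (M * ω (dist (u k) (v k))))
        atTop (𝓝 0) := by
      have : Tendsto (fun k => M * ω (dist (u k) (v k))) atTop (𝓝 (M * 0)) :=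
        tendsto_const_nhds.mul hωd
      have := (ENNReal.continuous_ofReal.tendsto _).comp this
      simpa [Function.comp_def] using this
    set e : ℕ → ENNReal :=
      fun k => ENNReal.ofReal (M * ω (dist (u k) (v k))) + ENNReal.ofReal σ with he_def
    have he : Tendsto e atTop (𝓝 (ENNReal.ofReal σ)) := by
      simpa using herr.add (tendsto_const_nhds (x := ENNReal.ofReal σ))
    have hlimsup_e : Filter.limsup e atTop = ENNReal.ofReal σ := he.limsup_eq
    set c : ENNReal := ENNReal.ofReal (1 + σ) with hc_def
    have hc0 : c ≠ 0 := (ENNReal.ofReal_pos.mpr (by linarith)).ne'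
    have hctop : c ≠ ⊤ := ENNReal.ofReal_ne_top
    set Y : ℕ → ENNReal := fun k => G k (u k) + H k (v k) with hY_def
    have pt : ∀ k, J k (w k) ≤ e k + c * Y k := by
      intro k
      refine (hw2 k).trans_eq ?_
      simp only [he_def, hY_def, hc_def]
      ring
    -- liminf of c * Y
    have hcY_liminf : Filter.liminf (fun k => c * Y k) atTop ≤
        c * Filter.liminf Y atTop := by
      have := ENNReal.liminf_mul_le (f := atTop) (u := fun _ : ℕ => c) (v := Y)
        (by left; simpa using hc0) (by left; simpa using hctop)
      simpa [Pi.mul_def] using this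
    have hcY_limsup : Filter.limsup (fun k => c * Y k) atTop =
        c * Filter.limsup Y atTop := by
      simpa using ENNReal.limsup_const_mul_of_ne_top (f := atTop) (u := Y) hctop
    have hY_liminf : Filter.liminf Y atTop ≤
        Filter.liminf (fun k => G k (u k)) atTop +
          Filter.limsup (fun k => H k (v k)) atTop :=
      myLiminfAddLe' _ _
    have hY_limsup : Filter.limsup Y atTop ≤
        Filter.limsup (fun k => G k (u k)) atTop +
          Filter.limsup (fun k => H k (v k)) atTop :=
      myLimsupAddLe _ _
    constructor
    · calc gammaLiminf J x ≤ Filter.liminf (fun k => J k (w k)) atTop :=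
            iInf_le (fun u : {u : ℕ → X // Tendsto u atTop (𝓝 x)} =>
              Filter.liminf (fun k => J k (u.1 k)) atTop) ⟨w, hwt⟩
        _ ≤ Filter.liminf (fun k => e k + c * Y k) atTop :=
            Filter.liminf_le_liminf (.of_forall pt)
        _ ≤ Filter.limsup e atTop + Filter.liminf (fun k => c * Y k) atTop :=
            myLiminfAddLe _ _
        _ = ENNReal.ofReal σ + Filter.liminf (fun k => c * Y k) atTop := by
            rw [hlimsup_e]
        _ ≤ ENNReal.ofReal σ + c * (Filter.liminf (fun k => G k (u k)) atTop +
              Filter.limsup (fun k => H k (v k)) atTop) := by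
            refine add_le_add_right (hcY_liminf.trans ?_) _
            exact mul_le_mul_right hY_liminf c
        _ = c * (Filter.liminf (fun k => G k (u k)) atTop +
              Filter.limsup (fun k => H k (v k)) atTop) + ENNReal.ofReal σ := by
            rw [add_comm]
    · calc gammaLimsup J x ≤ Filter.limsup (fun k => J k (w k)) atTop :=
            iInf_le (fun u : {u : ℕ → X // Tendsto u atTop (𝓝 x)} =>
              Filter.limsup (fun k => J k (u.1 k)) atTop) ⟨w, hwt⟩
        _ ≤ Filter.limsup (fun k => e k + c * Y k) atTop :=
            Filter.limsup_le_limsup (.of_forall pt)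
        _ ≤ Filter.limsup e atTop + Filter.limsup (fun k => c * Y k) atTop :=
            myLimsupAddLe _ _
        _ = ENNReal.ofReal σ + c * Filter.limsup Y atTop := by
            rw [hlimsup_e, hcY_limsup]
        _ ≤ ENNReal.ofReal σ + c * (Filter.limsup (fun k => G k (u k)) atTop +
              Filter.limsup (fun k => H k (v k)) atTop) :=
            add_le_add_right (mul_le_mul_right hY_limsup c) _
        _ = c * (Filter.limsup (fun k => G k (u k)) atTop +
              Filter.limsup (fun k => H k (v k)) atTop) + ENNReal.ofReal σ := by
            rw [add_comm]
  -- conclude: take σ → 0 for each pair, then infimum over pairs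
  have key1 : ∀ u v : {u : ℕ → X // Tendsto u atTop (𝓝 x)},
      gammaLiminf J x ≤ Filter.liminf (fun k => G k (u.1 k)) atTop +
        Filter.limsup (fun k => H k (v.1 k)) atTop := fun u v =>
    myLimitStep _ _ fun σ hσ => (key u.1 v.1 u.2 v.2 σ hσ).1
  have key2 : ∀ u v : {u : ℕ → X // Tendsto u atTop (𝓝 x)},
      gammaLimsup J x ≤ Filter.limsup (fun k => G k (u.1 k)) atTop +
        Filter.limsup (fun k => H k (v.1 k)) atTop := fun u v =>
    myLimitStep _ _ fun σ hσ => (key u.1 v.1 u.2 v.2 σ hσ).2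
  constructor
  · unfold gammaLiminf gammaLimsup; rw [ENNReal.iInf_add]
    refine le_iInf fun u => ?_
    rw [ENNReal.add_iInf]
    exact le_iInf fun v => key1 u v
  · unfold gammaLimsup; rw [ENNReal.iInf_add]
    refine le_iInf fun u => ?_
    rw [ENNReal.add_iInf]
    exact le_iInf fun v => key2 u v
end
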